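/- Let g be an M♮-convex function with finite nonempty effective domain and let b : E → {0,1}. Let {x_k}_{k=k̲}^{k̄} be a sequence such that x_k ∈ 𝒯_k for all k and, for each k ∈ {k̲+1, …, k̄}, x_{k−1} = x_k − χ_{u_k} + χ_{v_k} for some minimum transition (u_k, v_k) with respect to x_k. Assume k̲ + 1 ≤ k̄ and suppose there exists an index j ∈ {k̲+1, …, k̄} such that g(x_j) < g(x_{j−1}). Then for every k ∈ {k̲, …, j}, the point x_k is a supported Pareto optimal point of the biobjective problem of minimizing (g(x), ⟨b,x⟩) over x ∈ dom g: x_k is Pareto optimal and there exist real numbers λ₁ > 0 and λ₂ > 0 such that λ₁ g(x_k) + λ₂ ⟨b,x_k⟩ ≤ λ₁ g(y) + λ₂ ⟨b,y⟩ for all y ∈ dom g. -/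

import Mathlib

/-!
The minimum `φ k` of `g` on the level `⟨b, ·⟩ = k` is a discretely convex function of `k` on
`[k̲, k̄]`, by an M♮-exchange argument. Hence its slopes `φ (m - 1) - φ m` are nonincreasing, and
they are positive for `m ≤ j` because `φ j < φ (j - 1)`. So for `k ≤ j` the line of slope
`λ = φ (k - 1) - φ k > 0` (any large `λ` when `k = k̲`) supports `φ` at `k`, i.e. `x_k` minimizes
`g + λ ⟨b, ·⟩` over `dom g`; a minimizer of a positively weighted sum is Pareto optimal.
-/

open scoped BigOperators

/-- Characteristic vector of a singleton `{u}`. -/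
def chiv {E : Type*} [DecidableEq E] (u : E) : E → ℤ := fun e => if e = u then 1 else 0

/-- Characteristic vector allowing the dummy symbol `z` (modelled as `none`), with `χ_z = 0`. -/
def chiOpt {E : Type*} [DecidableEq E] (v : Option E) : E → ℤ :=
  fun e => match v with
  | none => 0
  | some w => chiv w e

/-- M♮-convexity (with nonempty effective domain) for `g : (E → ℤ) → ℝ ∪ {+∞}`. -/
def MnatConvex {E : Type*} [DecidableEq E] (g : (E → ℤ) → WithTop ℝ) : Prop :=
  (∃ x, g x < ⊤) ∧
  ∀ x y : E → ℤ, g x < ⊤ → g y < ⊤ → ∀ u : E, y u < x u →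
    (g (x - chiv u) + g (y + chiv u) ≤ g x + g y) ∨
    (∃ v : E, x v < y v ∧
      g (x - chiv u + chiv v) + g (y + chiv u - chiv v) ≤ g x + g y)

/-- `⟨b,x⟩ = ∑ e, b e * x e`. -/
def innerb {E : Type*} [Fintype E] (b : E → ℤ) (x : E → ℤ) : ℤ := ∑ e, b e * x e

/-- `𝒯_i`: the minimizers of `g` on `𝒫_i = {x ∈ dom g : ⟨b,x⟩ = i}`. -/
def Tset {E : Type*} [Fintype E] (g : (E → ℤ) → WithTop ℝ) (b : E → ℤ) (i : ℤ) :
    Set (E → ℤ) :=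
  {x | g x < ⊤ ∧ innerb b x = i ∧ ∀ y : E → ℤ, g y < ⊤ → innerb b y = i → g x ≤ g y}

/-- A transition `(u,v)` with respect to `x`: `u ∈ E₁`, `v ∈ E₀ ∪ {z}`, and
`x - χ_u + χ_v ∈ dom g`. -/
def IsTransition {E : Type*} [DecidableEq E] (g : (E → ℤ) → WithTop ℝ) (b : E → ℤ)
    (x : E → ℤ) (u : E) (v : Option E) : Prop :=
  b u = 1 ∧ (∀ w : E, v = some w → b w = 0) ∧ g (x - chiv u + chiOpt v) < ⊤

/-- The cost `g(x;u,v) = g(x - χ_u + χ_v) - g(x)` of a transition (as a real number;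
both values are finite for transitions with respect to `x ∈ dom g`). -/
noncomputable def transCost {E : Type*} [DecidableEq E] (g : (E → ℤ) → WithTop ℝ)
    (x : E → ℤ) (u : E) (v : Option E) : ℝ :=
  WithTop.untopD 0 (g (x - chiv u + chiOpt v)) - WithTop.untopD 0 (g x)

/-- A minimum transition with respect to `x`. -/
def IsMinTransition {E : Type*} [Fintype E] [DecidableEq E] (g : (E → ℤ) → WithTop ℝ)
    (b : E → ℤ) (x : E → ℤ) (u : E) (v : Option E) : Prop :=
  IsTransition g b x u v ∧
    ∀ (u' : E) (v' : Option E), IsTransition g b x u' v' →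
      transCost g x u v ≤ transCost g x u' v'

open Set

lemma WithTop.coe_untopD_of_ne_top {α : Type*} (d : α) {a : WithTop α} (ha : a ≠ ⊤) :
    ((a.untopD d : α) : WithTop α) = a := by
  lift a to α using ha
  rfl

lemma WithTop.untopD_le_untopD {α : Type*} [PartialOrder α] (d : α) {a c : WithTop α}
    (hc : c ≠ ⊤) (h : a ≤ c) : a.untopD d ≤ c.untopD d :=
  WithTop.untopD_le (h.trans_eq (WithTop.coe_untopD_of_ne_top d hc).symm)

section ConvexSequence

variable {f : ℤ → ℝ} {a b : ℤ}

lemma antitoneOn_sub_of_convex (hf : ∀ m, a < m → m < b → 2 * f m ≤ f (m - 1) + f (m + 1)) :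
    AntitoneOn (fun m => f (m - 1) - f m) (Ioc a b) := by
  refine antitoneOn_of_succ_le ordConnected_Ioc fun m _ hm hm' => ?_
  rw [Order.succ_eq_add_one] at hm' ⊢
  have := hf m hm.1 (by linarith [hm'.2])
  simp only [add_sub_cancel_right]
  linarith

lemma add_mul_le_of_slope_bounds {k : ℤ} {l : ℝ}
    (hlo : ∀ m ∈ Ioc a k, l ≤ f (m - 1) - f m) (hhi : ∀ m ∈ Ioc k b, f (m - 1) - f m ≤ l) :
    ∀ i ∈ Icc a b, f k + l * k ≤ f i + l * i := by
  have hdown : AntitoneOn (fun i : ℤ => f i + l * i) (Icc a k) := by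
    refine antitoneOn_of_succ_le ordConnected_Icc fun i _ hi hi' => ?_
    rw [Order.succ_eq_add_one] at hi' ⊢
    have := hlo (i + 1) ⟨by linarith [hi.1], hi'.2⟩
    simp only [add_sub_cancel_right, Int.cast_add, Int.cast_one] at this ⊢
    linarith
  have hup : MonotoneOn (fun i : ℤ => f i + l * i) (Icc k b) := by
    refine monotoneOn_of_le_succ ordConnected_Icc fun i _ hi hi' => ?_
    rw [Order.succ_eq_add_one] at hi' ⊢
    have := hhi (i + 1) ⟨by linarith [hi.1], hi'.2⟩
    simp only [add_sub_cancel_right, Int.cast_add, Int.cast_one] at this ⊢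
    linarith
  intro i hi
  rcases le_total i k with hik | hki
  · exact hdown ⟨hi.1, hik⟩ ⟨hi.1.trans hik, le_rfl⟩ hik
  · exact hup ⟨le_rfl, hki.trans hi.2⟩ ⟨hki, hi.2⟩ hki

lemma exists_pos_supporting_line (hf : ∀ m, a < m → m < b → 2 * f m ≤ f (m - 1) + f (m + 1))
    {k : ℤ} (hk : k ∈ Icc a b) (hdec : a < k → 0 < f (k - 1) - f k) :
    ∃ l : ℝ, 0 < l ∧ ∀ i ∈ Icc a b, f k + l * k ≤ f i + l * i := by
  have hanti := antitoneOn_sub_of_convex hf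
  rcases hk.1.lt_or_eq with hak | rfl
  · refine ⟨f (k - 1) - f k, hdec hak, add_mul_le_of_slope_bounds ?_ ?_⟩
    · exact fun m hm => hanti ⟨hm.1, hm.2.trans hk.2⟩ ⟨hak, hk.2⟩ hm.2
    · exact fun m hm => hanti ⟨hak, hk.2⟩ ⟨hak.trans hm.1, hm.2⟩ hm.1.le
  · refine ⟨max (f a - f (a + 1)) 1, lt_max_of_lt_right one_pos,
      add_mul_le_of_slope_bounds (fun m hm => absurd hm.2 (not_le.2 hm.1)) fun m hm => ?_⟩
    have ha1 : a + 1 ∈ Ioc a b := ⟨lt_add_one a, by linarith [hm.1, hm.2]⟩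
    have := hanti ha1 hm (by linarith [hm.1])
    simp only [add_sub_cancel_right] at this
    exact this.trans (le_max_left _ _)

end ConvexSequence

section MnatConvex

variable {E : Type*} [Fintype E] {g : (E → ℤ) → WithTop ℝ} {b : E → ℤ}

@[simp]
lemma innerb_add (b x y : E → ℤ) : innerb b (x + y) = innerb b x + innerb b y := by
  simp [innerb, mul_add, Finset.sum_add_distrib]

@[simp]
lemma innerb_sub (b x y : E → ℤ) : innerb b (x - y) = innerb b x - innerb b y := by
  simp [innerb, mul_sub, Finset.sum_sub_distrib]

lemma exists_lt_of_innerb_lt (hb : ∀ e, b e = 0 ∨ b e = 1) {x y : E → ℤ}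
    (h : innerb b x < innerb b y) : ∃ u, b u = 1 ∧ x u < y u := by
  obtain ⟨u, -, hu⟩ := Finset.exists_lt_of_sum_lt h
  rcases hb u with hbu | hbu <;> rw [hbu] at hu
  · simp at hu
  · exact ⟨u, hbu, by simpa using hu⟩

lemma Tset_nonempty_of_finite (hfin : {x : E → ℤ | g x < ⊤}.Finite) {y : E → ℤ} (hy : g y < ⊤) :
    (Tset g b (innerb b y)).Nonempty := by
  obtain ⟨m, hm, hmin⟩ := Set.exists_min_image {w | g w < ⊤ ∧ innerb b w = innerb b y} g
    (hfin.subset fun w hw => hw.1) ⟨y, hy, rfl⟩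
  exact ⟨m, hm.1, hm.2, fun w hw hwb => hmin w ⟨hw, hwb⟩⟩

variable [DecidableEq E]

@[simp]
lemma innerb_chiv (b : E → ℤ) (u : E) : innerb b (chiv u) = b u := by
  simp [innerb, chiv]

lemma sum_natAbs_sub_exchange_lt {x y : E → ℤ} {u v : E} (hu : x u < y u) (hv : y v < x v) :
    ∑ e, ((y - chiv u + chiv v) e - x e).natAbs < ∑ e, (y e - x e).natAbs := by
  have huv : u ≠ v := by rintro rfl; omega
  refine Finset.sum_lt_sum (fun e _ => ?_) ⟨u, Finset.mem_univ u, ?_⟩ <;>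
    simp only [Pi.add_apply, Pi.sub_apply, chiv] <;> split_ifs <;> subst_vars <;> omega

/-- In the exchange between `y` at level `k + 1` and `x` at level `k - 1`, either both new points
lie on level `k`, or they lie on levels `k ± 1` again, in which case the new point on level `k + 1` is still a minimizer and is closer to `x`. -/
theorem MnatConvex.add_le_add_of_mem_Tset (hg : MnatConvex g) (hb : ∀ e, b e = 0 ∨ b e = 1)
    {k : ℤ} {z : E → ℤ} (hz : z ∈ Tset g b k) (x y : E → ℤ) (hx : x ∈ Tset g b (k - 1))
    (hy : y ∈ Tset g b (k + 1)) : g z + g z ≤ g x + g y := by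
  have hlevel : ∀ p q, g p < ⊤ → g q < ⊤ → innerb b p = k → innerb b q = k →
      g p + g q ≤ g y + g x → g z + g z ≤ g x + g y := fun p q hp hq hpk hqk h =>
    (add_le_add (hz.2.2 p hp hpk) (hz.2.2 q hq hqk)).trans (h.trans_eq (add_comm _ _))
  have hfin : g y + g x < ⊤ := WithTop.add_lt_top.2 ⟨hy.1, hx.1⟩
  obtain ⟨u, hbu, hxyu⟩ := exists_lt_of_innerb_lt hb (show innerb b x < innerb b y by
    rw [hx.2.1, hy.2.1]; omega)
  rcases hg.2 y x hy.1 hx.1 u hxyu with h | ⟨v, hv, h⟩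
  · obtain ⟨hp, hq⟩ := WithTop.add_lt_top.1 (h.trans_lt hfin)
    exact hlevel _ _ hp hq (by simp [hy.2.1, hbu]) (by simp [hx.2.1, hbu]) h
  obtain ⟨hp, hq⟩ := WithTop.add_lt_top.1 (h.trans_lt hfin)
  rcases hb v with hbv | hbv
  · exact hlevel _ _ hp hq (by simp [hy.2.1, hbu, hbv]) (by simp [hx.2.1, hbu, hbv]) h
  · set y' := y - chiv u + chiv v
    have hgy' : g y' ≤ g y := by
      have hgx : g x ≤ g (x + chiv u - chiv v) := hx.2.2 _ hq (by simp [hx.2.1, hbu, hbv])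
      exact (WithTop.add_le_add_iff_right hx.1.ne).1 ((add_le_add le_rfl hgx).trans h)
    have hy' : y' ∈ Tset g b (k + 1) :=
      ⟨hp, by simp [y', hy.2.1, hbu, hbv], fun w hw hwk => hgy'.trans (hy.2.2 w hw hwk)⟩
    exact (hg.add_le_add_of_mem_Tset hb hz x y' hx hy').trans (add_le_add le_rfl hgy')
termination_by ∑ e, (y e - x e).natAbs
decreasing_by exact sum_natAbs_sub_exchange_lt hxyu hv

end MnatConvex

lemma not_exists_dominating_of_weighted_min {α : Type*} {G : α → WithTop ℝ} {B : α → ℤ} {x : α}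
    {l1 l2 : ℝ} (hl1 : 0 < l1) (hl2 : 0 < l2) (hx : G x < ⊤)
    (hmin : ∀ y, G y < ⊤ → l1 * (G x).untopD 0 + l2 * B x ≤ l1 * (G y).untopD 0 + l2 * B y) :
    ¬∃ y, G y < ⊤ ∧ G y ≤ G x ∧ B y ≤ B x ∧ ¬(G y = G x ∧ B y = B x) := by
  rintro ⟨y, hy, hGle, hBle, hne⟩
  have hGx := WithTop.coe_untopD_of_ne_top 0 hx.ne
  have hGy := WithTop.coe_untopD_of_ne_top 0 hy.ne
  set r := (G x).untopD 0
  set s := (G y).untopD 0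
  have hsr : s ≤ r := by rw [← hGx, ← hGy] at hGle; exact_mod_cast hGle
  have hBle' : (B y : ℝ) ≤ B x := by exact_mod_cast hBle
  have hsum := hmin y hy
  have hrs : r = s := by nlinarith
  have hB : B y = B x := by
    have : (B y : ℝ) = B x := by nlinarith
    exact_mod_cast this
  exact hne ⟨by rw [← hGx, ← hGy, hrs], hB⟩

theorem stmt_8_general {E : Type*} [Fintype E] [DecidableEq E]
    (g : (E → ℤ) → WithTop ℝ) (b : E → ℤ)
    (hg : MnatConvex g)
    (hfin : {x : E → ℤ | g x < ⊤}.Finite)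
    (hb : ∀ e : E, b e = 0 ∨ b e = 1)
    (kmin kmax : ℤ)
    (hkmin : (Tset g b kmin).Nonempty ∧ ∀ k : ℤ, (Tset g b k).Nonempty → kmin ≤ k)
    (hkmax : (Tset g b kmax).Nonempty ∧ ∀ k : ℤ, (Tset g b k).Nonempty → k ≤ kmax)
    (x : ℤ → (E → ℤ))
    (hxk : ∀ k : ℤ, kmin ≤ k → k ≤ kmax → x k ∈ Tset g b k)
    (j : ℤ) (hj2 : j ≤ kmax)
    (hgj : g (x j) < g (x (j - 1))) :
    ∀ k : ℤ, kmin ≤ k → k ≤ j →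
      (¬∃ y : E → ℤ, g y < ⊤ ∧ g y ≤ g (x k) ∧ innerb b y ≤ innerb b (x k) ∧
        ¬(g y = g (x k) ∧ innerb b y = innerb b (x k))) ∧
      (∃ l1 l2 : ℝ, 0 < l1 ∧ 0 < l2 ∧
        ∀ y : E → ℤ, g y < ⊤ →
          l1 * WithTop.untopD 0 (g (x k)) + l2 * (innerb b (x k) : ℝ) ≤
            l1 * WithTop.untopD 0 (g y) + l2 * (innerb b y : ℝ)) := by
  intro k hk1 hkj
  have hlevel : ∀ y, g y < ⊤ → innerb b y ∈ Icc kmin kmax := fun y hy =>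
    ⟨hkmin.2 _ (Tset_nonempty_of_finite hfin hy), hkmax.2 _ (Tset_nonempty_of_finite hfin hy)⟩
  set φ : ℤ → ℝ := fun m => (g (x m)).untopD 0
  have hφ : ∀ m, kmin ≤ m → m ≤ kmax → g (x m) = φ m := fun m h1 h2 =>
    (WithTop.coe_untopD_of_ne_top 0 (hxk m h1 h2).1.ne).symm
  have hconv : ∀ m, kmin < m → m < kmax → 2 * φ m ≤ φ (m - 1) + φ (m + 1) := by
    intro m h1 h2
    have := hg.add_le_add_of_mem_Tset hb (hxk m h1.le h2.le) _ _
      (hxk (m - 1) (by omega) (by omega)) (hxk (m + 1) (by omega) (by omega))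
    rw [hφ m (by omega) (by omega), hφ (m - 1) (by omega) (by omega),
      hφ (m + 1) (by omega) (by omega)] at this
    rw [two_mul]
    exact_mod_cast this
  have hdec : kmin < k → 0 < φ (k - 1) - φ k := by
    intro hk
    rw [hφ j (by omega) hj2, hφ (j - 1) (by omega) (by omega)] at hgj
    exact (sub_pos.2 (WithTop.coe_lt_coe.1 hgj)).trans_le
      (antitoneOn_sub_of_convex hconv ⟨hk, hkj.trans hj2⟩ ⟨hk.trans_le hkj, hj2⟩ hkj)
  obtain ⟨l, hl, hline⟩ := exists_pos_supporting_line hconv ⟨hk1, hkj.trans hj2⟩ hdec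
  have hxk' := hxk k hk1 (hkj.trans hj2)
  have hweighted : ∀ y, g y < ⊤ →
      1 * φ k + l * innerb b (x k) ≤ 1 * (g y).untopD 0 + l * innerb b y := by
    intro y hy
    have hi := hlevel y hy
    have hφy : φ (innerb b y) ≤ (g y).untopD 0 :=
      WithTop.untopD_le_untopD 0 hy.ne ((hxk _ hi.1 hi.2).2.2 y hy rfl)
    have := hline _ hi
    rw [hxk'.2.1]
    linarith
  exact ⟨not_exists_dominating_of_weighted_min one_pos hl hxk'.1 hweighted, 1, l, one_pos, hl,
    hweighted⟩

/-- each `x_k` for `k̲ ≤ k ≤ j` is a supported Pareto optimal point: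
it is Pareto optimal, and some positive weights `λ₁, λ₂` make it minimize the
weighted sum `λ₁ g(·) + λ₂ ⟨b,·⟩` over `dom g`. -/
theorem stmt_8 {E : Type*} [Fintype E] [DecidableEq E] [Nonempty E]
    (g : (E → ℤ) → WithTop ℝ) (b : E → ℤ)
    (hg : MnatConvex g)
    (hfin : {x : E → ℤ | g x < ⊤}.Finite)
    (hb : ∀ e : E, b e = 0 ∨ b e = 1)
    (kmin kmax : ℤ)
    (hkmin : (Tset g b kmin).Nonempty ∧ ∀ k : ℤ, (Tset g b k).Nonempty → kmin ≤ k)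
    (hkmax : (Tset g b kmax).Nonempty ∧ ∀ k : ℤ, (Tset g b k).Nonempty → k ≤ kmax)
    (x : ℤ → (E → ℤ))
    (hxk : ∀ k : ℤ, kmin ≤ k → k ≤ kmax → x k ∈ Tset g b k)
    (hstep : ∀ k : ℤ, kmin + 1 ≤ k → k ≤ kmax →
      ∃ (u : E) (v : Option E), IsMinTransition g b (x k) u v ∧
        x (k - 1) = x k - chiv u + chiOpt v)
    (hgap : kmin + 1 ≤ kmax)
    (j : ℤ) (hj1 : kmin + 1 ≤ j) (hj2 : j ≤ kmax)
    (hgj : g (x j) < g (x (j - 1))) :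
    ∀ k : ℤ, kmin ≤ k → k ≤ j →
      (¬∃ y : E → ℤ, g y < ⊤ ∧ g y ≤ g (x k) ∧ innerb b y ≤ innerb b (x k) ∧
        ¬(g y = g (x k) ∧ innerb b y = innerb b (x k))) ∧
      (∃ l1 l2 : ℝ, 0 < l1 ∧ 0 < l2 ∧
        ∀ y : E → ℤ, g y < ⊤ →
          l1 * WithTop.untopD 0 (g (x k)) + l2 * (innerb b (x k) : ℝ) ≤
            l1 * WithTop.untopD 0 (g y) + l2 * (innerb b y : ℝ)) :=
  stmt_8_general g b hg hfin hb kmin kmax hkmin hkmax x hxk j hj2 hgj
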